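/- arXiv:1102.1830 — 5 statements merged into one kernel-verified Lean document; each statement's English description precedes it below -/
import Mathlib

section
/- For every t, s ∈ ℝ with t ≠ s or t = s, and d ∈ (0, 1/2), one has ∫_{-∞}^{min(t,s)} (t-u)^{d-1} (s-u)^{d-1} du = (Γ(d) Γ(1-2d) / Γ(1-d)) · |t-s|^{2d-1}. -/
/-!
For `s < t` the substitution `u = s - (t - s) v` turns the integral into
`(t - s) ^ (α + β - 1) * ∫₀^∞ v ^ (β - 1) (1 + v) ^ (α - 1) dv`, a beta integral of the
second kind, and `x = v / (1 + v)` maps that to `B(β, 1 - α - β) = Γ(β) Γ(1 - α - β) / Γ(1 - α)`.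
The theorem is the case `α = β = d`, after exchanging `t` and `s` if necessary.
-/

open MeasureTheory Real Set

lemma integral_rpow_mul_one_sub_rpow {a b : ℝ} (ha : 0 < a) (hb : 0 < b) :
    ∫ x in (0 : ℝ)..1, x ^ (a - 1) * (1 - x) ^ (b - 1)
      = Gamma a * Gamma b / Gamma (a + b) := by
  have hcomplex : EqOn (fun x : ℝ ↦ (x : ℂ) ^ (a - 1 : ℂ) * (1 - x : ℂ) ^ (b - 1 : ℂ))
      (fun x ↦ ((x ^ (a - 1) * (1 - x) ^ (b - 1) : ℝ) : ℂ)) (uIcc 0 1) := by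
    intro x hx
    rw [uIcc_of_le zero_le_one] at hx
    push_cast [Complex.ofReal_cpow hx.1, Complex.ofReal_cpow (sub_nonneg.2 hx.2)]
    rfl
  rw [← ProbabilityTheory.beta, ProbabilityTheory.beta_eq_betaIntegralReal a b ha hb,
    Complex.betaIntegral, intervalIntegral.integral_congr hcomplex,
    intervalIntegral.integral_ofReal, Complex.ofReal_re]

lemma image_div_one_add_Ioi_zero : (fun v : ℝ ↦ v / (1 + v)) '' Ioi 0 = Ioo 0 1 := by
  ext x
  constructor
  · rintro ⟨v, hv : 0 < v, rfl⟩
    exact ⟨by positivity, (div_lt_one (by positivity)).2 (by linarith)⟩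
  · rintro ⟨hx₀, hx₁⟩
    have h1x : 0 < 1 - x := sub_pos.2 hx₁
    refine ⟨x / (1 - x), div_pos hx₀ h1x, ?_⟩
    field_simp
    ring

lemma injOn_div_one_add_Ioi_zero : InjOn (fun v : ℝ ↦ v / (1 + v)) (Ioi 0) := by
  intro v (hv : 0 < v) w (hw : 0 < w) h
  rw [div_eq_div_iff (by positivity) (by positivity)] at h
  linarith

lemma hasDerivAt_div_one_add {v : ℝ} (hv : 1 + v ≠ 0) :
    HasDerivAt (fun v : ℝ ↦ v / (1 + v)) (1 / (1 + v) ^ 2) v :=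
  ((hasDerivAt_id' v).fun_div ((hasDerivAt_id' v).const_add 1) hv).congr_deriv (by ring)

lemma integral_Ioi_rpow_mul_one_add_rpow {a b : ℝ} (ha : 0 < a) (hb : 0 < b) :
    ∫ v in Ioi 0, v ^ (a - 1) * (1 + v) ^ (-(a + b))
      = Gamma a * Gamma b / Gamma (a + b) := by
  have hpointwise : EqOn
      (fun v : ℝ ↦
        |1 / (1 + v) ^ 2| • ((v / (1 + v)) ^ (a - 1) * (1 - v / (1 + v)) ^ (b - 1)))
      (fun v ↦ v ^ (a - 1) * (1 + v) ^ (-(a + b))) (Ioi 0) := by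
    intro v (hv : (0 : ℝ) < v)
    have h1v : 0 < 1 + v := by linarith
    have hsplit :
        (1 + v) ^ (a + b) = (1 + v) ^ (a - 1) * (1 + v) ^ (b - 1) * (1 + v) ^ (2 : ℕ) := by
      rw [← rpow_natCast, ← rpow_add h1v, ← rpow_add h1v]
      congr 1
      push_cast
      ring
    have hcompl : 1 - v / (1 + v) = (1 + v)⁻¹ := by field_simp; ring
    dsimp only
    rw [smul_eq_mul, abs_of_pos (by positivity), hcompl, div_rpow hv.le h1v.le, inv_rpow h1v.le,
      rpow_neg h1v.le, hsplit]
    field_simp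
  rw [← integral_rpow_mul_one_sub_rpow ha hb, intervalIntegral.integral_of_le zero_le_one,
    integral_Ioc_eq_integral_Ioo, ← image_div_one_add_Ioi_zero,
    integral_image_eq_integral_abs_deriv_smul measurableSet_Ioi
      (fun v (hv : 0 < v) ↦ (hasDerivAt_div_one_add (by linarith)).hasDerivWithinAt)
      injOn_div_one_add_Ioi_zero,
    setIntegral_congr_fun measurableSet_Ioi hpointwise]

lemma integral_Iio_sub_rpow_mul_sub_rpow (α β : ℝ) {s t : ℝ} (h : s < t) :
    ∫ u in Iio s, (t - u) ^ (α - 1) * (s - u) ^ (β - 1)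
      = (t - s) ^ (α + β - 1) * ∫ v in Ioi 0, v ^ (β - 1) * (1 + v) ^ (α - 1) := by
  set c := t - s
  have hc : 0 < c := sub_pos.2 h
  have himage : (fun v ↦ s - c * v) '' Ioi 0 = Iio s := by
    ext u
    constructor
    · rintro ⟨v, hv : 0 < v, rfl⟩
      simp only [mem_Iio, sub_lt_self_iff]
      positivity
    · intro (hu : u < s)
      exact ⟨(s - u) / c, div_pos (sub_pos.2 hu) hc, by field_simp; ring⟩
  have hderiv (v : ℝ) : HasDerivAt (fun v ↦ s - c * v) (-c) v :=
    (((hasDerivAt_id' v).const_mul c).const_sub s).congr_deriv (by ring)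
  have hinj : InjOn (fun v ↦ s - c * v) (Ioi 0) := fun v _ w _ hvw ↦
    mul_left_cancel₀ hc.ne' (sub_right_injective hvw)
  have hpointwise : EqOn
      (fun v ↦ |-c| • ((t - (s - c * v)) ^ (α - 1) * (s - (s - c * v)) ^ (β - 1)))
      (fun v ↦ c ^ (α + β - 1) * (v ^ (β - 1) * (1 + v) ^ (α - 1))) (Ioi 0) := by
    intro v (hv : 0 < v)
    have hsplit : c ^ (α + β - 1) = c ^ (α - 1) * c ^ (β - 1) * c := by
      rw [← rpow_add hc, ← rpow_add_one hc.ne']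
      ring_nf
    dsimp only
    rw [show t - (s - c * v) = c * (1 + v) by ring, show s - (s - c * v) = c * v by ring,
      abs_neg, abs_of_pos hc, smul_eq_mul, mul_rpow hc.le (by positivity),
      mul_rpow hc.le hv.le, hsplit]
    ring
  rw [← himage, integral_image_eq_integral_abs_deriv_smul measurableSet_Ioi
      (fun v _ ↦ (hderiv v).hasDerivWithinAt) hinj,
    setIntegral_congr_fun measurableSet_Ioi hpointwise, integral_const_mul]

lemma integral_Iio_sub_rpow_mul_sub_rpow_eq_Gamma {α β s t : ℝ} (hβ : 0 < β) (hαβ : α + β < 1)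
    (h : s < t) :
    ∫ u in Iio s, (t - u) ^ (α - 1) * (s - u) ^ (β - 1)
      = Gamma β * Gamma (1 - α - β) / Gamma (1 - α) * (t - s) ^ (α + β - 1) := by
  have hbeta := integral_Ioi_rpow_mul_one_add_rpow hβ (by linarith : 0 < 1 - α - β)
  rw [show -(β + (1 - α - β)) = α - 1 by ring, show β + (1 - α - β) = 1 - α by ring] at hbeta
  rw [integral_Iio_sub_rpow_mul_sub_rpow α β h, hbeta, mul_comm]

theorem stmt_0 (d t s : ℝ) (hd : 0 < d) (hd' : d < 1/2) (hts : t ≠ s) :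
    ∫ u in Set.Iio (min t s), (t - u) ^ (d - 1) * (s - u) ^ (d - 1)
      = Real.Gamma d * Real.Gamma (1 - 2 * d) / Real.Gamma (1 - d)
        * |t - s| ^ (2 * d - 1) := by
  wlog h : s < t generalizing t s
  · rw [min_comm, abs_sub_comm]
    simp_rw [mul_comm ((t - _) ^ (d - 1))]
    exact this s t hts.symm (lt_of_le_of_ne (not_lt.1 h) hts)
  rw [min_eq_right h.le, abs_of_pos (sub_pos.2 h), show 1 - 2 * d = 1 - d - d by ring,
    show 2 * d - 1 = d + d - 1 by ring]
  exact integral_Iio_sub_rpow_mul_sub_rpow_eq_Gamma hd (by linarith) h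
end

section
/- Let d ∈ (0,1/2), α > d + 1/2, M > 0 and T < −e. Suppose ℓ : ℝ → ℝ satisfies |ℓ(s)| ≤ M (2|s| log log |s|)^{1/2} for all s < T. Then lim_{t → −∞} (1/|t|^α) ∫_{−∞}^t [(−s)^{d−1} − (t−s)^{d−1}] |ℓ(s)| ds = 0. -/
/-!
The kernel `(t - s)^(d-1) - (-s)^(d-1)` is nonnegative on `s < t < 0` and homogeneous of degree
`d - 1`, so if `|ℓ s| ≤ K (-s)^γ` the substitution `s = t (1 + v)` bounds the integral by
`K J (-t)^(d+γ)` with `J = ∫₀^∞ (v^(d-1) - (1+v)^(d-1)) (1+v)^γ dv`. This `J` is finite when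
`γ < 1 - d`: the integrand is `O(v^(d-1))` at `0` and `O(v^(d-2+γ))` at `∞`. Since
`√(2 x log log x) ≤ x^(1/2+ε) / √ε` for `x ≥ 1`, taking `γ = 1/2 + ε` with `d + γ < min α 1`
leaves the decay `(-t)^(d+γ-α)`.
-/

open MeasureTheory Real Set Filter

theorem rpow_sub_one_add_rpow_le {r v : ℝ} (hr : -1 ≤ r) (hv : 0 < v) :
    v ^ r - (1 + v) ^ r ≤ v ^ (r - 1) := by
  have hbern : 1 - v⁻¹ ≤ (1 + v⁻¹) ^ r :=
    calc 1 - v⁻¹ ≤ (1 + v⁻¹)⁻¹ := by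
          rw [inv_eq_one_div (1 + v⁻¹), le_div_iff₀ (by positivity)]
          nlinarith [sq_nonneg v⁻¹]
      _ = (1 + v⁻¹) ^ (-1 : ℝ) := (rpow_neg_one _).symm
      _ ≤ (1 + v⁻¹) ^ r := rpow_le_rpow_of_exponent_le (by simp; positivity) hr
  have hsplit : (1 + v) ^ r = v ^ r * (1 + v⁻¹) ^ r := by
    rw [← mul_rpow hv.le (by positivity), mul_add, mul_inv_cancel₀ hv.ne', mul_one, add_comm]
  have hscaled := mul_le_mul_of_nonneg_left hbern (rpow_nonneg hv.le r)
  rw [mul_sub, mul_one, ← div_eq_mul_inv] at hscaled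
  rw [hsplit, rpow_sub_one hv.ne']
  linarith

theorem sqrt_two_mul_log_log_le_rpow {x ε : ℝ} (hε : 0 < ε) (hx : 1 ≤ x) :
    √(2 * x * log (log x)) ≤ x ^ (1 / 2 + ε) / √ε := by
  have hloglog : log (log x) ≤ x ^ (2 * ε) / (2 * ε) :=
    (log_le_self (log_nonneg hx)).trans (log_le_rpow_div (by linarith) (by positivity))
  have hsq : 2 * x * log (log x) ≤ x ^ (1 + 2 * ε) / ε := by
    calc 2 * x * log (log x) ≤ 2 * x * (x ^ (2 * ε) / (2 * ε)) := by gcongr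
      _ = x ^ (1 + 2 * ε) / ε := by
        rw [rpow_add (by linarith), rpow_one]; field_simp
  calc √(2 * x * log (log x)) ≤ √(x ^ (1 + 2 * ε) / ε) := sqrt_le_sqrt hsq
    _ = x ^ (1 / 2 + ε) / √ε := by
      rw [sqrt_div' _ hε.le, sqrt_eq_rpow, ← rpow_mul (by linarith)]
      ring_nf

/-- `((t - s)^(d-1) - (-s)^(d-1)) (-s)^γ` at `s = t (1 + v)`, divided by `(-t)^(d-1+γ)`. -/
noncomputable def fracKernelProfile (d γ v : ℝ) : ℝ := (v ^ (d - 1) - (1 + v) ^ (d - 1)) * (1 + v) ^ γ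

section Profile

variable {d γ : ℝ}

theorem fracKernelProfile_nonneg (hd : d ≤ 1) {v : ℝ} (hv : 0 < v) :
    0 ≤ fracKernelProfile d γ v := by
  have : (1 + v) ^ (d - 1) ≤ v ^ (d - 1) := rpow_le_rpow_of_nonpos hv (by linarith) (by linarith)
  unfold fracKernelProfile
  exact mul_nonneg (by linarith) (rpow_nonneg (by linarith) γ)

theorem integrableOn_fracKernelProfile (hd : 0 < d) (hγ : 0 ≤ γ) (hdγ : d + γ < 1) :
    IntegrableOn (fracKernelProfile d γ) (Ioi 0) := by
  have hmeas : Measurable (fracKernelProfile d γ) := by unfold fracKernelProfile; fun_prop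
  have hnorm : ∀ v ∈ Ioi (0 : ℝ), ‖fracKernelProfile d γ v‖ =
      (v ^ (d - 1) - (1 + v) ^ (d - 1)) * (1 + v) ^ γ := fun v hv =>
    (norm_of_nonneg (fracKernelProfile_nonneg (by linarith) hv))
  rw [← Ioc_union_Ioi_eq_Ioi zero_le_one]
  refine IntegrableOn.union ?_ ?_
  · have hint : IntegrableOn (fun v : ℝ => 2 ^ γ * v ^ (d - 1)) (Ioc 0 1) := by
      exact ((intervalIntegrable_iff_integrableOn_Ioc_of_le zero_le_one).1
        (intervalIntegral.intervalIntegrable_rpow' (by linarith))).const_mul _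
    refine hint.mono' hmeas.aestronglyMeasurable.restrict
      ((ae_restrict_iff' measurableSet_Ioc).2 (ae_of_all _ fun v hv => ?_))
    rw [hnorm v hv.1]
    have hpos : 0 ≤ (1 + v) ^ (d - 1) := rpow_nonneg (by linarith [hv.1]) _
    calc (v ^ (d - 1) - (1 + v) ^ (d - 1)) * (1 + v) ^ γ ≤ v ^ (d - 1) * 2 ^ γ :=
          mul_le_mul (by linarith) (rpow_le_rpow (by linarith [hv.1]) (by linarith [hv.2]) hγ)
            (rpow_nonneg (by linarith [hv.1]) _) (rpow_nonneg hv.1.le _)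
      _ = 2 ^ γ * v ^ (d - 1) := mul_comm _ _
  · have hint : IntegrableOn (fun v : ℝ => 2 ^ γ * v ^ (d - 2 + γ)) (Ioi 1) :=
      (integrableOn_Ioi_rpow_of_lt (by linarith) one_pos).const_mul _
    refine hint.mono' hmeas.aestronglyMeasurable.restrict
      ((ae_restrict_iff' measurableSet_Ioi).2 (ae_of_all _ fun v (hv : 1 < v) => ?_))
    have hv0 : 0 < v := zero_lt_one.trans hv
    rw [hnorm v hv0]
    have hdecay : v ^ (d - 1) - (1 + v) ^ (d - 1) ≤ v ^ (d - 2) := by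
      simpa only [show d - 1 - 1 = d - 2 by ring] using
        rpow_sub_one_add_rpow_le (r := d - 1) (by linarith) hv0
    calc (v ^ (d - 1) - (1 + v) ^ (d - 1)) * (1 + v) ^ γ ≤ v ^ (d - 2) * (2 * v) ^ γ := by
          gcongr
          linarith
      _ = 2 ^ γ * v ^ (d - 2 + γ) := by
          rw [mul_rpow zero_le_two hv0.le, rpow_add hv0]; ring

end Profile

section ChangeOfVariables

variable {t : ℝ}

theorem image_mul_one_add_Ioi (ht : t < 0) : (fun v => t * (1 + v)) '' Ioi 0 = Iio t := by
  ext s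
  constructor
  · rintro ⟨v, hv : 0 < v, rfl⟩
    show t * (1 + v) < t
    nlinarith
  · intro (hs : s < t)
    refine ⟨s / t - 1, ?_, ?_⟩
    · show 0 < s / t - 1
      rw [sub_pos, one_lt_div_of_neg ht]
      exact hs
    · field_simp [ht.ne]
      ring

theorem hasDerivWithinAt_mul_one_add (t : ℝ) (s : Set ℝ) (v : ℝ) :
    HasDerivWithinAt (fun v => t * (1 + v)) t s v := by
  simpa using ((hasDerivAt_id v).const_add 1).const_mul t |>.hasDerivWithinAt

theorem injective_mul_one_add (ht : t ≠ 0) : Function.Injective fun v : ℝ => t * (1 + v) :=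
  fun _ _ h => add_left_cancel (mul_left_cancel₀ ht h)

theorem integrableOn_Iio_iff_comp_mul_one_add (ht : t < 0) (g : ℝ → ℝ) :
    IntegrableOn g (Iio t) ↔ IntegrableOn (fun v => |t| * g (t * (1 + v))) (Ioi 0) := by
  rw [← image_mul_one_add_Ioi ht]
  exact integrableOn_image_iff_integrableOn_abs_deriv_smul measurableSet_Ioi
    (fun v _ => hasDerivWithinAt_mul_one_add t _ v) (injective_mul_one_add ht.ne).injOn g

theorem setIntegral_Iio_eq_comp_mul_one_add (ht : t < 0) (g : ℝ → ℝ) :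
    ∫ s in Iio t, g s = ∫ v in Ioi 0, |t| * g (t * (1 + v)) := by
  rw [← image_mul_one_add_Ioi ht]
  exact integral_image_eq_integral_abs_deriv_smul measurableSet_Ioi
    (fun v _ => hasDerivWithinAt_mul_one_add t _ v) (injective_mul_one_add ht.ne).injOn g

end ChangeOfVariables

section Kernel

variable {d γ t : ℝ}

theorem abs_mul_kernel_comp_mul_one_add (ht : t < 0) {v : ℝ} (hv : 0 < v) :
    |t| * (((t - t * (1 + v)) ^ (d - 1) - (-(t * (1 + v))) ^ (d - 1)) * (-(t * (1 + v))) ^ γ) =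
      (-t) ^ (d + γ) * fracKernelProfile d γ v := by
  have hx : 0 < -t := neg_pos.2 ht
  rw [show t - t * (1 + v) = -t * v by ring, show -(t * (1 + v)) = -t * (1 + v) by ring,
    mul_rpow hx.le hv.le, mul_rpow hx.le (by linarith), mul_rpow hx.le (by linarith),
    abs_of_neg ht, show d + γ = 1 + (d - 1) + γ by ring, rpow_add hx, rpow_add hx, rpow_one,
    fracKernelProfile]
  ring

theorem integrableOn_kernel_mul_rpow (hd : 0 < d) (hγ : 0 ≤ γ) (hdγ : d + γ < 1) (ht : t < 0) :
    IntegrableOn (fun s => ((t - s) ^ (d - 1) - (-s) ^ (d - 1)) * (-s) ^ γ) (Iio t) := by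
  rw [integrableOn_Iio_iff_comp_mul_one_add ht]
  exact IntegrableOn.congr_fun ((integrableOn_fracKernelProfile hd hγ hdγ).const_mul _)
    (fun v hv => (abs_mul_kernel_comp_mul_one_add ht hv).symm) measurableSet_Ioi

theorem integral_kernel_mul_rpow (ht : t < 0) :
    ∫ s in Iio t, ((t - s) ^ (d - 1) - (-s) ^ (d - 1)) * (-s) ^ γ =
      (-t) ^ (d + γ) * ∫ v in Ioi 0, fracKernelProfile d γ v := by
  rw [setIntegral_Iio_eq_comp_mul_one_add ht, ← integral_const_mul]
  exact setIntegral_congr_fun measurableSet_Ioi fun v hv => abs_mul_kernel_comp_mul_one_add ht hv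

end Kernel

theorem abs_integral_kernel_mul_le {d γ t K : ℝ} (hd : 0 < d) (hγ : 0 ≤ γ) (hdγ : d + γ < 1)
    (ht : t < 0) {g : ℝ → ℝ} (hg : ∀ s < t, |g s| ≤ K * (-s) ^ γ) :
    |∫ s in Iic t, ((-s) ^ (d - 1) - (t - s) ^ (d - 1)) * g s| ≤
      K * (∫ v in Ioi 0, fracKernelProfile d γ v) * (-t) ^ (d + γ) := by
  have hpointwise : ∀ s < t, |((-s) ^ (d - 1) - (t - s) ^ (d - 1)) * g s| ≤
      K * (((t - s) ^ (d - 1) - (-s) ^ (d - 1)) * (-s) ^ γ) := by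
    intro s hs
    have hker : (-s) ^ (d - 1) ≤ (t - s) ^ (d - 1) :=
      rpow_le_rpow_of_nonpos (by linarith) (by linarith) (by linarith)
    rw [abs_mul, abs_of_nonpos (by linarith), neg_sub]
    calc _ ≤ ((t - s) ^ (d - 1) - (-s) ^ (d - 1)) * (K * (-s) ^ γ) :=
          mul_le_mul_of_nonneg_left (hg s hs) (by linarith)
      _ = _ := by ring
  calc |∫ s in Iic t, ((-s) ^ (d - 1) - (t - s) ^ (d - 1)) * g s|
      = |∫ s in Iio t, ((-s) ^ (d - 1) - (t - s) ^ (d - 1)) * g s| := by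
        rw [setIntegral_congr_set Iio_ae_eq_Iic]
    _ ≤ ∫ s in Iio t, |((-s) ^ (d - 1) - (t - s) ^ (d - 1)) * g s| :=
        abs_integral_le_integral_abs
    _ ≤ ∫ s in Iio t, K * (((t - s) ^ (d - 1) - (-s) ^ (d - 1)) * (-s) ^ γ) :=
        integral_mono_of_nonneg (ae_of_all _ fun _ => abs_nonneg _)
          ((integrableOn_kernel_mul_rpow hd hγ hdγ ht).const_mul K)
          ((ae_restrict_iff' measurableSet_Iio).2 (ae_of_all _ hpointwise))
    _ = K * (∫ v in Ioi 0, fracKernelProfile d γ v) * (-t) ^ (d + γ) := by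
        rw [integral_const_mul, integral_kernel_mul_rpow ht]; ring

theorem abs_le_rpow_of_le_sqrt_log_log {ℓ : ℝ → ℝ} {M T ε : ℝ} (hM : 0 ≤ M) (hε : 0 < ε)
    (hT : T ≤ -1) (henv : ∀ s < T, |ℓ s| ≤ M * √(2 * |s| * log (log |s|))) {s : ℝ} (hs : s < T) :
    |ℓ s| ≤ M / √ε * (-s) ^ (1 / 2 + ε) := by
  have hs' : |s| = -s := abs_of_neg (by linarith)
  calc |ℓ s| ≤ M * ((-s) ^ (1 / 2 + ε) / √ε) := by
        refine (henv s hs).trans ?_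
        rw [hs']
        exact mul_le_mul_of_nonneg_left (sqrt_two_mul_log_log_le_rpow hε (by linarith)) hM
    _ = M / √ε * (-s) ^ (1 / 2 + ε) := by ring

theorem tendsto_one_div_abs_rpow_mul_atBot {F : ℝ → ℝ} {C T α β : ℝ} (hβα : β < α)
    (hF : ∀ t < T, |F t| ≤ C * (-t) ^ β) :
    Tendsto (fun t => 1 / |t| ^ α * F t) atBot (nhds 0) := by
  have hdecay : Tendsto (fun t : ℝ => C * (-t) ^ (β - α)) atBot (nhds 0) := by
    simpa using ((tendsto_rpow_neg_atTop (y := α - β) (by linarith)).comp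
      tendsto_neg_atBot_atTop).const_mul C
  refine squeeze_zero_norm' ?_ hdecay
  filter_upwards [eventually_lt_atBot T, eventually_lt_atBot 0] with t htT ht0
  have ht : 0 < -t := neg_pos.2 ht0
  calc ‖1 / |t| ^ α * F t‖ = |F t| / (-t) ^ α := by
        rw [norm_eq_abs, abs_mul, abs_of_neg ht0, abs_of_pos (by positivity)]
        ring
    _ ≤ C * (-t) ^ β / (-t) ^ α := by gcongr; exact hF t htT
    _ = C * (-t) ^ (β - α) := by rw [rpow_sub ht]; ring

theorem stmt_3_general (d α M T : ℝ) (hd : 0 < d) (hd' : d < 1/2)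
    (hα : d + 1/2 < α) (hM : 0 < M) (hT : T < -Real.exp 1)
    (ℓ : ℝ → ℝ)
    (henv : ∀ s < T, |ℓ s| ≤ M * Real.sqrt (2 * |s| * Real.log (Real.log |s|))) :
    Filter.Tendsto
      (fun t : ℝ =>
        (1 / |t| ^ α) * ∫ s in Set.Iic t, ((-s) ^ (d - 1) - (t - s) ^ (d - 1)) * |ℓ s|)
      Filter.atBot (nhds 0) := by
  obtain ⟨ε, hε, hεα, hεd⟩ : ∃ ε > 0, d + (1 / 2 + ε) < α ∧ d + (1 / 2 + ε) < 1 :=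
    ⟨min (α - (d + 1 / 2)) (1 / 2 - d) / 2, by positivity,
      by linarith [min_le_left (α - (d + 1 / 2)) (1 / 2 - d)],
      by linarith [min_le_right (α - (d + 1 / 2)) (1 / 2 - d)]⟩
  have hT1 : T ≤ -1 := (hT.trans (neg_lt_neg (one_lt_exp_iff.2 one_pos))).le
  refine tendsto_one_div_abs_rpow_mul_atBot
    (C := M / √ε * ∫ v in Ioi 0, fracKernelProfile d (1 / 2 + ε) v) hεα fun t (ht : t < T) => ?_
  exact abs_integral_kernel_mul_le hd (by positivity) hεd (by linarith) fun s hs =>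
    (abs_abs (ℓ s)).trans_le (abs_le_rpow_of_le_sqrt_log_log hM.le hε hT1 henv (hs.trans ht))

theorem stmt_3 (d α M T : ℝ) (hd : 0 < d) (hd' : d < 1/2)
    (hα : d + 1/2 < α) (hM : 0 < M) (hT : T < -Real.exp 1)
    (ℓ : ℝ → ℝ) (hmeas : Measurable ℓ)
    (henv : ∀ s < T, |ℓ s| ≤ M * Real.sqrt (2 * |s| * Real.log (Real.log |s|))) :
    Filter.Tendsto
      (fun t : ℝ =>
        (1 / |t| ^ α) * ∫ s in Set.Iic t, ((-s) ^ (d - 1) - (t - s) ^ (d - 1)) * |ℓ s|)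
      Filter.atBot (nhds 0) :=
  stmt_3_general d α M T hd hd' hα hM hT ℓ henv
end

section
/- Let λ > 0 and suppose x : ℝ → ℝ is a continuous solution of x(t) = x(s) − λ∫_s^t x(u) du + g(t) − g(s) for all s ≤ t, where g is continuous. Then for all s ≤ t: x(t) = e^{−λ(t−s)} x(s) + e^{−λt} ∫_s^t e^{λu} dg(u), where the last integral is the Riemann–Stieltjes integral defined by integration by parts: ∫_s^t e^{λu} dg(u) = e^{λt}g(t) − e^{λs}g(s) − λ∫_s^t g(u) e^{λu} du. -/
/-!
Set `z = x - g`. The integral equation says that `z` is an antiderivative of `-λ x = -λ z - λ g`,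
so `e^{λu} z(u)` has derivative `-λ g(u) e^{λu}`; integrating this from `s` to `t` and
multiplying by `e^{-λt}` gives the formula.
-/

open MeasureTheory Real Set Filter

theorem hasDerivAt_of_forall_sub_eq_intervalIntegral {E : Type*} [NormedAddCommGroup E]
    [NormedSpace ℝ E] [CompleteSpace E] {f f' : ℝ → E} (hf' : Continuous f')
    (h : ∀ s t : ℝ, s ≤ t → f t - f s = ∫ u in s..t, f' u) (u : ℝ) :
    HasDerivAt f (f' u) u := by
  have hf : f = fun v => f 0 + ∫ w in (0 : ℝ)..v, f' w := by
    funext v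
    rcases le_total 0 v with hv | hv
    · rw [← h 0 v hv, add_sub_cancel]
    · rw [intervalIntegral.integral_symm, ← h v 0 hv, neg_sub, add_sub_cancel]
  rw [hf]
  exact (hf'.integral_hasStrictDerivAt 0 u).hasDerivAt.const_add _

theorem exp_mul_sub_eq_intervalIntegral_of_hasDerivAt {z b : ℝ → ℝ} (a : ℝ)
    (hb : Continuous b) (hz : ∀ u, HasDerivAt z (b u - a * z u) u) (s t : ℝ) :
    exp (a * t) * z t - exp (a * s) * z s = ∫ u in s..t, exp (a * u) * b u := by
  have hderiv : ∀ u, HasDerivAt (fun v => exp (a * v) * z v) (exp (a * u) * b u) u := by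
    intro u
    have hexp : HasDerivAt (fun v => exp (a * v)) (exp (a * u) * a) u := by
      simpa using ((hasDerivAt_id u).const_mul a).exp
    exact (hexp.mul (hz u)).congr_deriv (by ring)
  have hcont : Continuous fun u => exp (a * u) * b u := by fun_prop
  exact (intervalIntegral.integral_eq_sub_of_hasDerivAt (fun u _ => hderiv u)
    (hcont.intervalIntegrable s t)).symm

theorem stmt_8_general (lam : ℝ) (g : ℝ → ℝ) (hg : Continuous g)
    (x : ℝ → ℝ) (hx : Continuous x)
    (hxsol : ∀ s t : ℝ, s ≤ t →
      x t = x s - lam * (∫ u in Set.Icc s t, x u) + g t - g s) :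
    ∀ s t : ℝ, s ≤ t →
      x t = Real.exp (-(lam * (t - s))) * x s +
        Real.exp (-(lam * t)) *
          (Real.exp (lam * t) * g t - Real.exp (lam * s) * g s
            - lam * ∫ u in Set.Icc s t, g u * Real.exp (lam * u)) := by
  intro s t hst
  have hIcc (f : ℝ → ℝ) {a b : ℝ} (hab : a ≤ b) :
      ∫ u in Icc a b, f u = ∫ u in a..b, f u := by
    rw [intervalIntegral.integral_of_le hab, integral_Icc_eq_integral_Ioc]
  have hzsol : ∀ a b : ℝ, a ≤ b →
      (x b - g b) - (x a - g a) = ∫ u in a..b, -lam * x u := by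
    intro a b hab
    rw [intervalIntegral.integral_const_mul, ← hIcc x hab]
    linear_combination hxsol a b hab
  have hz : ∀ u, HasDerivAt (fun v => x v - g v) (-lam * g u - lam * (x u - g u)) u := by
    intro u
    exact (hasDerivAt_of_forall_sub_eq_intervalIntegral (by fun_prop) hzsol u).congr_deriv
      (by ring)
  have key : exp (lam * t) * (x t - g t) - exp (lam * s) * (x s - g s)
      = -lam * ∫ u in s..t, g u * exp (lam * u) := by
    simpa only [mul_left_comm _ (-lam), intervalIntegral.integral_const_mul, mul_comm (exp _)]
      using exp_mul_sub_eq_intervalIntegral_of_hasDerivAt lam (by fun_prop) hz s t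
  have hinv : exp (-(lam * t)) * exp (lam * t) = 1 := by rw [← exp_add]; simp
  have hshift : exp (-(lam * (t - s))) = exp (-(lam * t)) * exp (lam * s) := by
    rw [← exp_add]; ring_nf
  rw [hIcc _ hst, hshift]
  linear_combination exp (-(lam * t)) * key - x t * hinv

theorem stmt_8 (lam : ℝ) (hlam : 0 < lam) (g : ℝ → ℝ) (hg : Continuous g)
    (x : ℝ → ℝ) (hx : Continuous x)
    (hxsol : ∀ s t : ℝ, s ≤ t →
      x t = x s - lam * (∫ u in Set.Icc s t, x u) + g t - g s) :
    ∀ s t : ℝ, s ≤ t →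
      x t = Real.exp (-(lam * (t - s))) * x s +
        Real.exp (-(lam * t)) *
          (Real.exp (lam * t) * g t - Real.exp (lam * s) * g s
            - lam * ∫ u in Set.Icc s t, g u * Real.exp (lam * u)) :=
  stmt_8_general lam g hg x hx hxsol
end

section
/- Let [a,b] ⊂ ℝ be compact, p ∈ (0,2), g : [a,b] → ℝ continuous with v_p(g,[a,b]) < ∞, and F ∈ C¹(ℝ) with F' Lipschitz continuous on compacts. Then the Riemann–Stieltjes integral ∫_a^b (F'∘g) dg exists and F(g(b)) − F(g(a)) = ∫_a^b (F'∘g)(s) dg(s). -/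
open MeasureTheory Real Set

noncomputable section

/-- `x 0, …, x n` is a partition of `[a,b]`. -/
def IsPartition (a b : ℝ) (n : ℕ) (x : ℕ → ℝ) : Prop :=
  x 0 = a ∧ x n = b ∧ ∀ i < n, x i < x (i + 1)

/-- `f` has bounded `p`-variation on `[a,b]`. -/
def pVarBdd (p : ℝ) (f : ℝ → ℝ) (a b : ℝ) : Prop :=
  ∃ C : ℝ, ∀ n : ℕ, ∀ x : ℕ → ℝ, IsPartition a b n x →
    ∑ i ∈ Finset.range n, |f (x (i + 1)) - f (x i)| ^ p ≤ C

/-- Riemann–Stieltjes sum of `f` against the integrator `h`. -/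
def RSSum (f h : ℝ → ℝ) (n : ℕ) (x y : ℕ → ℝ) : ℝ :=
  ∑ i ∈ Finset.range n, f (y i) * (h (x (i + 1)) - h (x i))

/-- The Riemann–Stieltjes integral of `f` with respect to `h` over `[a,b]`
exists and equals `I`: the Riemann–Stieltjes sums converge to `I` as the mesh
of the partition tends to `0`, uniformly over intermediate points. -/
def RSInteg (f h : ℝ → ℝ) (a b I : ℝ) : Prop :=
  ∀ ε > 0, ∃ δ > 0, ∀ n : ℕ, ∀ x y : ℕ → ℝ,
    IsPartition a b n x → (∀ i < n, x (i + 1) - x i < δ) →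
    (∀ i < n, x i ≤ y i ∧ y i ≤ x (i + 1)) →
    |RSSum f h n x y - I| < ε

/-! After telescoping `F (g b) - F (g a)` over the partition, each cell contributes
`F' (g yᵢ) (g xᵢ₊₁ - g xᵢ) - (F (g xᵢ₊₁) - F (g xᵢ))`, which Taylor's formula at the tag with
`F'` `L`-Lipschitz bounds by `L (|g yᵢ - g xᵢ|² + |g xᵢ₊₁ - g yᵢ|²)`. For a fine partition,
uniform continuity makes every such increment at most `η`, so each square is at most
`η ^ (2 - p)` times its `p`-th power; the `p`-th powers sum to at most the `p`-variation bound
`C` of `g` along the refinement `x₀ ≤ y₀ ≤ x₁ ≤ ⋯`. As `p < 2`, the error `L η ^ (2 - p) C`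
tends to `0`. -/

open Finset

namespace IsPartition

variable {a b : ℝ} {n : ℕ} {x : ℕ → ℝ}

theorem strictMonoOn (hx : IsPartition a b n x) : StrictMonoOn x (Set.Iic n) :=
  strictMonoOn_Iic_of_lt_succ fun i hi => by simpa [Order.succ_eq_add_one] using hx.2.2 i hi

theorem mem_Icc (hx : IsPartition a b n x) {i : ℕ} (hi : i ≤ n) : x i ∈ Icc a b := by
  refine ⟨hx.1 ▸ ?_, hx.2.1 ▸ ?_⟩ <;>
    exact hx.strictMonoOn.monotoneOn (by simp [hi]) (by simp [hi]) (by omega)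

theorem tag_mem_Icc (hx : IsPartition a b n x) {y : ℕ → ℝ}
    (hy : ∀ i < n, x i ≤ y i ∧ y i ≤ x (i + 1)) {i : ℕ} (hi : i < n) : y i ∈ Icc a b :=
  ⟨(hx.mem_Icc hi.le).1.trans (hy i hi).1, (hy i hi).2.trans (hx.mem_Icc hi).2⟩

end IsPartition

theorem exists_isPartition_sum_eq_of_monotone (φ : ℝ → ℝ → ℝ) (hφ : ∀ u, φ u u = 0) {b : ℝ} :
    ∀ (m : ℕ) (z : ℕ → ℝ), z m = b → (∀ i < m, z i ≤ z (i + 1)) →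
      ∃ n w, IsPartition (z 0) b n w ∧
        ∑ i ∈ range n, φ (w i) (w (i + 1)) = ∑ i ∈ range m, φ (z i) (z (i + 1))
  | 0, z, hb, _ => ⟨0, z, ⟨rfl, hb, by simp⟩, rfl⟩
  | m + 1, z, hb, hz => by
    obtain ⟨n, w, ⟨hw0, hwn, hw⟩, hsum⟩ :=
      exists_isPartition_sum_eq_of_monotone φ hφ m (fun i => z (i + 1)) hb
        fun i hi => hz (i + 1) (by omega)
    rw [sum_range_succ']
    rcases (hz 0 m.succ_pos).lt_or_eq with hlt | heq
    · refine ⟨n + 1, fun | 0 => z 0 | i + 1 => w i, ⟨rfl, hwn, ?_⟩, ?_⟩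
      · rintro (_ | i) hi
        exacts [show z 0 < w 0 from hw0 ▸ hlt, hw i (by omega)]
      · rw [sum_range_succ', hsum]
        dsimp only
        rw [hw0]
    · refine ⟨n, w, ⟨hw0.trans heq.symm, hwn, hw⟩, ?_⟩
      rw [hsum, ← heq, hφ, add_zero]

theorem Finset.sum_range_two_mul {M : Type*} [AddCommMonoid M] (f : ℕ → M) (n : ℕ) :
    ∑ j ∈ range (2 * n), f j = ∑ i ∈ range n, (f (2 * i) + f (2 * i + 1)) := by
  induction n with
  | zero => simp
  | succ n ih => rw [mul_add_one, sum_range_succ, sum_range_succ, sum_range_succ, ih, add_assoc]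

def interleave (x y : ℕ → ℝ) (j : ℕ) : ℝ := if Even j then x (j / 2) else y (j / 2)

@[simp]
theorem interleave_two_mul (x y : ℕ → ℝ) (i : ℕ) : interleave x y (2 * i) = x i := by
  simp [interleave]

@[simp]
theorem interleave_two_mul_add_one (x y : ℕ → ℝ) (i : ℕ) : interleave x y (2 * i + 1) = y i := by
  simp [interleave, Nat.mul_add_div]

section PVariation

variable {p a b C : ℝ} {g : ℝ → ℝ}
  (hC : ∀ n x, IsPartition a b n x → ∑ i ∈ range n, |g (x (i + 1)) - g (x i)| ^ p ≤ C)
include hC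

theorem sum_rpow_le_of_monotone (hp : p ≠ 0) {m : ℕ} {z : ℕ → ℝ} (h0 : z 0 = a) (hm : z m = b)
    (hz : ∀ i < m, z i ≤ z (i + 1)) : ∑ i ∈ range m, |g (z (i + 1)) - g (z i)| ^ p ≤ C := by
  obtain ⟨n, w, hw, hsum⟩ := exists_isPartition_sum_eq_of_monotone
    (fun u v => |g v - g u| ^ p) (by simp [zero_rpow hp]) m z hm hz
  exact hsum ▸ hC n w (h0 ▸ hw)

theorem sum_tagged_rpow_le (hp : p ≠ 0) {n : ℕ} {x y : ℕ → ℝ} (hx : IsPartition a b n x)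
    (hy : ∀ i < n, x i ≤ y i ∧ y i ≤ x (i + 1)) :
    ∑ i ∈ range n, (|g (y i) - g (x i)| ^ p + |g (x (i + 1)) - g (y i)| ^ p) ≤ C := by
  have hz : ∀ j < 2 * n, interleave x y j ≤ interleave x y (j + 1) := by
    intro j hj
    obtain ⟨i, rfl | rfl⟩ := j.even_or_odd'
    · simpa using (hy i (by omega)).1
    · simpa [show 2 * i + 1 + 1 = 2 * (i + 1) by ring] using (hy i (by omega)).2
  have := sum_rpow_le_of_monotone hC hp (by simpa [interleave] using hx.1)
    (by simpa using hx.2.1) hz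
  rw [sum_range_two_mul] at this
  simpa [show ∀ i, 2 * i + 1 + 1 = 2 * (i + 1) by intro; ring] using this

end PVariation

section Taylor

variable {F : ℝ → ℝ} {s : Set ℝ} [s.OrdConnected] {L : NNReal}

theorem abs_sub_sub_deriv_mul_le (hF : Differentiable ℝ F) (hL : LipschitzOnWith L (deriv F) s)
    {v w : ℝ} (hv : v ∈ s) (hw : w ∈ s) :
    |F w - F v - deriv F v * (w - v)| ≤ L * (w - v) ^ 2 := by
  have hderiv : ∀ t ∈ uIcc v w,
      HasDerivWithinAt (fun t => F t - t * deriv F v) (deriv F t - deriv F v) (uIcc v w) t :=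
    fun t _ => ((hF t).hasDerivAt.sub (hasDerivAt_mul_const (deriv F v))).hasDerivWithinAt
  have hbound : ∀ t ∈ uIcc v w, ‖deriv F t - deriv F v‖ ≤ L * |w - v| := fun t ht =>
    calc ‖deriv F t - deriv F v‖ ≤ L * |t - v| := by
          simpa [dist_eq_norm] using
            hL.dist_le_mul t (Set.OrdConnected.uIcc_subset ‹_› hv hw ht) v hv
      _ ≤ L * |w - v| := mul_le_mul_of_nonneg_left (abs_sub_left_of_mem_uIcc ht) L.coe_nonneg
  calc |F w - F v - deriv F v * (w - v)| = ‖(F w - w * deriv F v) - (F v - v * deriv F v)‖ := by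
        rw [Real.norm_eq_abs]; ring_nf
    _ ≤ L * |w - v| * ‖w - v‖ := (convex_uIcc v w).norm_image_sub_le_of_norm_hasDerivWithin_le
        hderiv hbound left_mem_uIcc right_mem_uIcc
    _ = L * (w - v) ^ 2 := by rw [Real.norm_eq_abs, mul_assoc, ← sq, sq_abs]

theorem abs_deriv_mul_sub_sub_le (hF : Differentiable ℝ F) (hL : LipschitzOnWith L (deriv F) s)
    {u v w : ℝ} (hu : u ∈ s) (hv : v ∈ s) (hw : w ∈ s) :
    |deriv F v * (w - u) - (F w - F u)| ≤ L * ((v - u) ^ 2 + (w - v) ^ 2) :=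
  calc |deriv F v * (w - u) - (F w - F u)|
      = |(F u - F v - deriv F v * (u - v)) - (F w - F v - deriv F v * (w - v))| := by ring_nf
    _ ≤ |F u - F v - deriv F v * (u - v)| + |F w - F v - deriv F v * (w - v)| := abs_sub _ _
    _ ≤ L * (u - v) ^ 2 + L * (w - v) ^ 2 := add_le_add
          (abs_sub_sub_deriv_mul_le hF hL hv hu) (abs_sub_sub_deriv_mul_le hF hL hv hw)
    _ = L * ((v - u) ^ 2 + (w - v) ^ 2) := by ring

end Taylor

theorem sq_le_rpow_mul_rpow {p r η : ℝ} (hp : p ≤ 2) (hr : 0 ≤ r) (hrη : r ≤ η) :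
    r ^ 2 ≤ η ^ (2 - p) * r ^ p := by
  rcases hr.eq_or_lt with rfl | hr
  · simpa using mul_nonneg (rpow_nonneg hrη _) (rpow_nonneg le_rfl p)
  calc r ^ 2 = r ^ (2 - p) * r ^ p := by
        rw [← rpow_add hr, sub_add_cancel, rpow_two]
    _ ≤ η ^ (2 - p) * r ^ p := by gcongr

theorem exists_pos_rpow_mul_lt {q : ℝ} (hq : 0 < q) (K : ℝ) {ε : ℝ} (hε : 0 < ε) :
    ∃ η > 0, η ^ q * K < ε := by
  have : Filter.Tendsto (fun η : ℝ => η ^ q * K) (nhdsWithin 0 (Ioi 0)) (nhds 0) :=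
    (((continuous_rpow_const hq.le).mul continuous_const).tendsto' 0 0
      (by simp [zero_rpow hq.ne'])).mono_left nhdsWithin_le_nhds
  exact ((this.eventually (gt_mem_nhds hε)).and self_mem_nhdsWithin).exists.imp
    fun η h => ⟨h.2, h.1⟩

theorem abs_RSSum_deriv_comp_sub_le {p a b C η : ℝ} {g F : ℝ → ℝ} {s : Set ℝ} [s.OrdConnected]
    {L : NNReal} (hp : p ≠ 0) (hp2 : p ≤ 2) (hη : 0 ≤ η)
    (hC : ∀ n x, IsPartition a b n x → ∑ i ∈ range n, |g (x (i + 1)) - g (x i)| ^ p ≤ C)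
    (hF : Differentiable ℝ F) (hL : LipschitzOnWith L (deriv F) s) (hgs : MapsTo g (Icc a b) s)
    {n : ℕ} {x y : ℕ → ℝ} (hx : IsPartition a b n x) (hy : ∀ i < n, x i ≤ y i ∧ y i ≤ x (i + 1))
    (hosc : ∀ i < n, |g (y i) - g (x i)| ≤ η ∧ |g (x (i + 1)) - g (y i)| ≤ η) :
    |RSSum (fun t => deriv F (g t)) g n x y - (F (g b) - F (g a))| ≤ L * (η ^ (2 - p) * C) := by
  have hmem : ∀ i < n, g (x i) ∈ s ∧ g (y i) ∈ s ∧ g (x (i + 1)) ∈ s := fun i hi =>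
    ⟨hgs (hx.mem_Icc hi.le), hgs (hx.tag_mem_Icc hy hi), hgs (hx.mem_Icc hi)⟩
  have htel : F (g b) - F (g a) = ∑ i ∈ range n, (F (g (x (i + 1))) - F (g (x i))) := by
    rw [sum_range_sub (fun i => F (g (x i))), hx.1, hx.2.1]
  calc |RSSum (fun t => deriv F (g t)) g n x y - (F (g b) - F (g a))|
      = |∑ i ∈ range n, (deriv F (g (y i)) * (g (x (i + 1)) - g (x i))
          - (F (g (x (i + 1))) - F (g (x i))))| := by
        rw [htel, RSSum, ← sum_sub_distrib]
    _ ≤ ∑ i ∈ range n, |deriv F (g (y i)) * (g (x (i + 1)) - g (x i))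
          - (F (g (x (i + 1))) - F (g (x i)))| := abs_sum_le_sum_abs _ _
    _ ≤ ∑ i ∈ range n, L * ((g (y i) - g (x i)) ^ 2 + (g (x (i + 1)) - g (y i)) ^ 2) :=
        sum_le_sum fun i hi => have h := hmem i (mem_range.1 hi)
          abs_deriv_mul_sub_sub_le hF hL h.1 h.2.1 h.2.2
    _ ≤ ∑ i ∈ range n, L * (η ^ (2 - p) * |g (y i) - g (x i)| ^ p
          + η ^ (2 - p) * |g (x (i + 1)) - g (y i)| ^ p) := by
        refine sum_le_sum fun i hi => ?_
        obtain ⟨h₁, h₂⟩ := hosc i (mem_range.1 hi)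
        rw [← sq_abs, ← sq_abs (g (x (i + 1)) - _)]
        gcongr <;> exact sq_le_rpow_mul_rpow hp2 (abs_nonneg _) ‹_›
    _ = L * (η ^ (2 - p) * ∑ i ∈ range n,
          (|g (y i) - g (x i)| ^ p + |g (x (i + 1)) - g (y i)| ^ p)) := by
        simp only [mul_sum, mul_add]
    _ ≤ L * (η ^ (2 - p) * C) := by
        gcongr
        exact sum_tagged_rpow_le hC hp hx hy

theorem stmt_11_general (p a b : ℝ) (hp : 0 < p) (hp2 : p < 2)
    (g F : ℝ → ℝ)
    (hg : ContinuousOn g (Set.Icc a b)) (hgv : pVarBdd p g a b)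
    (hF : ContDiff ℝ 1 F)
    (hF4 : ∀ r s : ℝ, ∃ L : NNReal, LipschitzOnWith L (deriv F) (Set.Icc r s)) :
    RSInteg (fun s => deriv F (g s)) g a b (F (g b) - F (g a)) := by
  obtain ⟨C, hC⟩ := hgv
  obtain ⟨R, hR⟩ := isCompact_Icc.exists_bound_of_continuousOn hg
  have hgR : MapsTo g (Icc a b) (Icc (-R) R) := fun t ht => abs_le.mp (hR t ht)
  obtain ⟨L, hL⟩ := hF4 (-R) R
  intro ε hε
  obtain ⟨η, hη, hηε⟩ := exists_pos_rpow_mul_lt (sub_pos.2 hp2) (L * C) hε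
  obtain ⟨δ, hδ, hgδ⟩ := Metric.uniformContinuousOn_iff_le.mp
    (isCompact_Icc.uniformContinuousOn_of_continuous hg) η hη
  refine ⟨δ, hδ, fun n x y hx hmesh hy => ?_⟩
  have hosc : ∀ i < n, |g (y i) - g (x i)| ≤ η ∧ |g (x (i + 1)) - g (y i)| ≤ η := by
    intro i hi
    constructor
    · refine hgδ _ (hx.tag_mem_Icc hy hi) _ (hx.mem_Icc hi.le) ?_
      rw [Real.dist_eq, abs_of_nonneg] <;> linarith [hy i hi, hmesh i hi]
    · refine hgδ _ (hx.mem_Icc hi) _ (hx.tag_mem_Icc hy hi) ?_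
      rw [Real.dist_eq, abs_of_nonneg] <;> linarith [hy i hi, hmesh i hi]
  calc _ ≤ L * (η ^ (2 - p) * C) := abs_RSSum_deriv_comp_sub_le hp.ne' hp2.le hη.le hC
        (hF.differentiable one_ne_zero) hL hgR hx hy hosc
    _ < ε := by linarith

theorem stmt_11 (p a b : ℝ) (hp : 0 < p) (hp2 : p < 2) (hab : a ≤ b)
    (g F : ℝ → ℝ)
    (hg : ContinuousOn g (Set.Icc a b)) (hgv : pVarBdd p g a b)
    (hF : ContDiff ℝ 1 F)
    (hF4 : ∀ r s : ℝ, ∃ L : NNReal, LipschitzOnWith L (deriv F) (Set.Icc r s)) :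
    RSInteg (fun s => deriv F (g s)) g a b (F (g b) - F (g a)) :=
  stmt_11_general p a b hp hp2 g F hg hgv hF hF4

end
end

section
/- Let σ₀ > 0 and γ ∈ [1/2, 1), and define on I = ℝ the functions σ(x) := σ₀|x|^γ and μ(x) := α|x|^γ + βx with α ∈ ℝ, β < 0. Set ψ(x) := μ(x)/σ(x) for x ≠ 0 extended appropriately. Then the function f(x) := sign((1−γ)σ₀ x − α/β) · |(1−γ)σ₀ x − α/β|^{1/(1−γ)} is a C¹ bijection from ℝ to ℝ, is strictly increasing, and satisfies f'(x) = σ(f(x)) for all x ∈ ℝ, and −λ f^{-1}(y) = μ(y)/σ(y) for all y ≠ 0 with λ := (1−γ)|β|. -/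
/-!
With `p = 1 / (1 - γ) > 1`, `f` is the odd power `t ↦ sign t * |t| ^ p` precomposed with the
affine map `x ↦ (1 - γ) σ₀ x - α / β`. The odd power is `C¹` with derivative `p |t| ^ (p - 1)`
(continuous, so the derivative extends across `0`), and `|f| ^ γ = |·| ^ (p γ) = |·| ^ (p - 1)`,
which gives `f' = σ₀ |f| ^ γ`. The inverse of the odd power `p` is the odd power `1 - γ`, and
`y = sign y |y| ^ (1 - γ) · |y| ^ γ` turns `-λ f⁻¹ y` into `μ y / σ y`.
-/

open Real Set

theorem Real.sign_eq_coe_sign (r : ℝ) : Real.sign r = (SignType.sign r : ℝ) := by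
  rcases lt_trichotomy r 0 with h | rfl | h
  · simp [sign_of_neg h, h]
  · simp
  · simp [sign_of_pos h, h]

noncomputable def signedRpow (p t : ℝ) : ℝ := Real.sign t * |t| ^ p

section signedRpow

variable {p r : ℝ}

theorem sign_signedRpow (p t : ℝ) : Real.sign (signedRpow p t) = Real.sign t := by
  rcases lt_trichotomy t 0 with h | rfl | h
  · have := rpow_pos_of_pos (abs_pos.mpr h.ne) p
    rw [signedRpow, sign_of_neg h, sign_of_neg (by linarith)]
  · simp [signedRpow]
  · have := rpow_pos_of_pos (abs_pos.mpr h.ne') p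
    rw [signedRpow, sign_of_pos h, sign_of_pos (by linarith)]

theorem abs_signedRpow (hp : p ≠ 0) (t : ℝ) : |signedRpow p t| = |t| ^ p := by
  rcases eq_or_ne t 0 with rfl | ht
  · simp [signedRpow, zero_rpow hp]
  · rcases Real.sign_apply_eq_of_ne_zero t ht with h | h <;>
      simp [signedRpow, h, abs_of_nonneg (rpow_nonneg (abs_nonneg t) p)]

theorem signedRpow_mul_abs_rpow (p q t : ℝ) :
    signedRpow p t * |t| ^ q = signedRpow (p + q) t := by
  rcases eq_or_ne t 0 with rfl | ht
  · simp [signedRpow]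
  · rw [signedRpow, signedRpow, rpow_add (abs_pos.mpr ht), mul_assoc]

@[simp] theorem signedRpow_one (t : ℝ) : signedRpow 1 t = t := by
  simp [signedRpow, Real.sign_eq_coe_sign]

theorem signedRpow_eq_mul_abs_rpow (p t : ℝ) : signedRpow p t = t * |t| ^ (p - 1) := by
  simpa using (signedRpow_mul_abs_rpow 1 (p - 1) t).symm

theorem signedRpow_signedRpow (hr : r ≠ 0) (p t : ℝ) :
    signedRpow p (signedRpow r t) = signedRpow (r * p) t := by
  rw [signedRpow, sign_signedRpow, abs_signedRpow hr, ← rpow_mul (abs_nonneg t), signedRpow]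

theorem leftInverse_signedRpow_inv (hp : p ≠ 0) :
    Function.LeftInverse (signedRpow p⁻¹) (signedRpow p) :=
  fun t => by rw [signedRpow_signedRpow hp, mul_inv_cancel₀ hp, signedRpow_one]

theorem rightInverse_signedRpow_inv (hp : p ≠ 0) :
    Function.RightInverse (signedRpow p⁻¹) (signedRpow p) :=
  fun t => by rw [signedRpow_signedRpow (inv_ne_zero hp), inv_mul_cancel₀ hp, signedRpow_one]

theorem continuous_signedRpow (hp : 1 ≤ p) : Continuous (signedRpow p) := by
  simp_rw [funext (signedRpow_eq_mul_abs_rpow p)]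
  exact continuous_id.mul ((continuous_rpow_const (by linarith)).comp continuous_abs)

theorem hasDerivAt_signedRpow_of_ne_zero (hp : 1 < p) {t : ℝ} (ht : t ≠ 0) :
    HasDerivAt (signedRpow p) (p * |t| ^ (p - 1)) t := by
  have hsign : ∀ᶠ s in nhds t, Real.sign s = Real.sign t := by
    rcases ht.lt_or_gt with h | h
    · filter_upwards [eventually_lt_nhds h] with s hs
      rw [sign_of_neg hs, sign_of_neg h]
    · filter_upwards [eventually_gt_nhds h] with s hs
      rw [sign_of_pos hs, sign_of_pos h]
  have hderiv : HasDerivAt (signedRpow p) (Real.sign t * (p * |t| ^ (p - 2) * t)) t :=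
    ((hasDerivAt_abs_rpow t hp).const_mul (Real.sign t)).congr_of_eventuallyEq
      (hsign.mono fun s hs => by simp only [signedRpow, hs])
  convert hderiv using 1
  rw [show p - 1 = p - 2 + 1 by ring, rpow_add_one (abs_ne_zero.mpr ht),
    Real.sign_eq_coe_sign, ← _root_.sign_mul_self t]
  ring

theorem hasDerivAt_signedRpow (hp : 1 < p) (t : ℝ) :
    HasDerivAt (signedRpow p) (p * |t| ^ (p - 1)) t :=
  hasDerivAt_of_hasDerivAt_of_ne' (x := 0) (fun _ hs => hasDerivAt_signedRpow_of_ne_zero hp hs)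
    (continuous_signedRpow hp.le).continuousAt
    (continuous_const.mul ((continuous_rpow_const (by linarith)).comp continuous_abs)).continuousAt
    t

theorem contDiff_signedRpow (hp : 1 < p) : ContDiff ℝ 1 (signedRpow p) := by
  rw [contDiff_one_iff_deriv]
  refine ⟨fun t => (hasDerivAt_signedRpow hp t).differentiableAt, ?_⟩
  simp_rw [funext fun t => (hasDerivAt_signedRpow hp t).deriv]
  exact continuous_const.mul ((continuous_rpow_const (by linarith)).comp continuous_abs)

theorem strictMono_signedRpow (hp : 1 < p) : StrictMono (signedRpow p) := by
  refine Monotone.strictMono_of_injective ?_ (leftInverse_signedRpow_inv (by linarith)).injective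
  refine monotone_of_deriv_nonneg (fun t => (hasDerivAt_signedRpow hp t).differentiableAt)
    fun t => ?_
  rw [(hasDerivAt_signedRpow hp t).deriv]
  have : 0 < p := by linarith
  positivity

end signedRpow

theorem hasDerivAt_signedRpow_one_div_one_sub {γ : ℝ} (hγ₀ : 0 < γ) (hγ₁ : γ < 1)
    (σ₀ a x : ℝ) :
    HasDerivAt (fun x => signedRpow (1 / (1 - γ)) ((1 - γ) * σ₀ * x - a))
      (σ₀ * |signedRpow (1 / (1 - γ)) ((1 - γ) * σ₀ * x - a)| ^ γ) x := by
  have h1γ : 0 < 1 - γ := by linarith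
  have hp : 1 < 1 / (1 - γ) := by rw [lt_div_iff₀ h1γ]; linarith
  have hinner : HasDerivAt (fun x => (1 - γ) * σ₀ * x - a) ((1 - γ) * σ₀) x := by
    simpa using ((hasDerivAt_id x).const_mul ((1 - γ) * σ₀)).sub_const a
  refine ((hasDerivAt_signedRpow hp _).comp x hinner).congr_deriv ?_
  rw [abs_signedRpow (by positivity), ← rpow_mul (abs_nonneg _),
    show 1 / (1 - γ) * γ = 1 / (1 - γ) - 1 by field_simp; ring]
  field_simp

theorem stmt_13 (σ₀ γ α β : ℝ) (hσ₀ : 0 < σ₀) (hγ : 1/2 ≤ γ) (hγ' : γ < 1)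
    (hβ : β < 0)
    (f : ℝ → ℝ)
    (hf : f = fun x : ℝ =>
      Real.sign ((1 - γ) * σ₀ * x - α / β)
        * |(1 - γ) * σ₀ * x - α / β| ^ (1 / (1 - γ))) :
    ContDiff ℝ 1 f
    ∧ StrictMono f
    ∧ Function.Bijective f
    ∧ (∀ x : ℝ, deriv f x = σ₀ * |f x| ^ γ)
    ∧ (∀ y : ℝ, y ≠ 0 →
        -((1 - γ) * |β|) * Function.invFun f y
          = (α * |y| ^ γ + β * y) / (σ₀ * |y| ^ γ)) := by
  change f = fun x => signedRpow (1 / (1 - γ)) ((1 - γ) * σ₀ * x - α / β) at hf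
  have h1γ : 0 < 1 - γ := by linarith
  have hp : 1 < 1 / (1 - γ) := by rw [lt_div_iff₀ h1γ]; linarith
  set g : ℝ → ℝ := fun y => (signedRpow (1 - γ) y + α / β) / ((1 - γ) * σ₀)
  have hfg : ∀ y, f (g y) = y := fun y => by
    have : (1 - γ) * σ₀ * g y - α / β = signedRpow (1 / (1 - γ))⁻¹ y := by
      simp only [g, one_div, inv_inv]; field_simp; ring
    rw [hf]; beta_reduce; rw [this]
    exact rightInverse_signedRpow_inv (by positivity) y
  have hmono : StrictMono f := hf ▸ (strictMono_signedRpow hp).comp fun s t hst => by gcongr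
  have hderiv : ∀ x, HasDerivAt f (σ₀ * |f x| ^ γ) x :=
    hf ▸ hasDerivAt_signedRpow_one_div_one_sub (by linarith) hγ' σ₀ (α / β)
  refine ⟨hf ▸ (contDiff_signedRpow hp).comp (by fun_prop), hmono,
    ⟨hmono.injective, fun y => ⟨g y, hfg y⟩⟩, fun x => (hderiv x).deriv, fun y hy => ?_⟩
  rw [hmono.injective ((Function.invFun_eq ⟨g y, hfg y⟩).trans (hfg y).symm)]
  have hyγ : 0 < |y| ^ γ := rpow_pos_of_pos (abs_pos.mpr hy) γ
  have hfactor : signedRpow (1 - γ) y * |y| ^ γ = y := by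
    rw [signedRpow_mul_abs_rpow, sub_add_cancel, signedRpow_one]
  have hβ₀ : β ≠ 0 := hβ.ne
  rw [abs_of_neg hβ, eq_div_iff (by positivity)]
  simp only [g]
  field_simp
  linear_combination β * hfactor
end
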